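/- For all integers 1 ≤ k, l ≤ n, the space of right ℂ[NDF_n]-module homomorphisms between exterior powers satisfies dim_ℂ Hom_{ℂ[NDF_n]}(Λ^k ℂ^n, Λ^l ℂ^n) = 1 if l ∈ {k, k−1}, and 0 otherwise. -/

import Mathlib

open scoped Classical

set_option maxHeartbeats 1000000
set_option synthInstance.maxHeartbeats 400000

noncomputable section

/-- The `k`-th exterior power `Λ^k ℂ^n`, with basis `{e_S}` indexed by the `k`-element
subsets `S` of `{1, …, n}` (modeled as `Fin n`). -/
abbrev ExtP (n k : ℕ) := {S : Finset (Fin n) // S.card = k} →₀ ℂ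

/-- The image of the basis vector `e_S` under a map `g`: `e_{g(S)}` if `|g(S)| = |S|`,
and `0` otherwise. -/
def extImg (n k : ℕ) (g : Fin n → Fin n) (S : {S : Finset (Fin n) // S.card = k}) :
    ExtP n k :=
  if h : (S.1.image g).card = k then Finsupp.single ⟨S.1.image g, h⟩ 1 else 0

/-- The operator on `Λ^k ℂ^n` induced by a map `g : {1,…,n} → {1,…,n}`:
`e_S ↦ e_{g(S)}` if `|g(S)| = |S|` and `e_S ↦ 0` otherwise. -/
def actOp (n k : ℕ) (g : Fin n → Fin n) : Module.End ℂ (ExtP n k) :=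
  Finsupp.lsum ℂ fun S => LinearMap.toSpanSingleton ℂ (ExtP n k) (extImg n k g S)

lemma actOp_single (n k : ℕ) (g : Fin n → Fin n) (S : {S : Finset (Fin n) // S.card = k}) :
    actOp n k g (Finsupp.single S 1) = extImg n k g S := by
  simp [actOp, LinearMap.toSpanSingleton_apply]

lemma actOp_id (n k : ℕ) : actOp n k id = 1 := by
  apply Finsupp.lhom_ext
  intro S c
  have : (Finsupp.single S c : ExtP n k) = c • Finsupp.single S 1 := by
    rw [Finsupp.smul_single, smul_eq_mul, mul_one]
  rw [this, map_smul, map_smul, actOp_single]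
  simp [extImg, S.2]

lemma actOp_comp (n k : ℕ) (f g : Fin n → Fin n) :
    actOp n k (f ∘ g) = actOp n k f * actOp n k g := by
  apply Finsupp.lhom_ext
  intro S c
  have hc : (Finsupp.single S c : ExtP n k) = c • Finsupp.single S 1 := by
    rw [Finsupp.smul_single, smul_eq_mul, mul_one]
  rw [hc, map_smul, map_smul]
  congr 1
  rw [Module.End.mul_apply, actOp_single, actOp_single]
  by_cases h1 : (S.1.image g).card = k
  · rw [show extImg n k g S = Finsupp.single (⟨S.1.image g, h1⟩ :
        {S : Finset (Fin n) // S.card = k}) 1 from dif_pos h1, actOp_single]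
    unfold extImg
    simp only [Finset.image_image]
  · rw [show extImg n k g S = 0 from dif_neg h1, map_zero]
    unfold extImg
    rw [dif_neg]
    intro hcomp
    apply h1
    have h2 := Finset.card_image_le (s := S.1.image g) (f := f)
    have h3 := Finset.card_image_le (s := S.1) (f := g)
    rw [Finset.image_image] at h2
    rw [hcomp] at *
    omega

/-- The monoid `NDFₙ` of non-decreasing functions from `{1, …, n}` to itself, under
composition.  (Left modules over its monoid algebra, with this composition
convention, are exactly the right `ℂ[NDFₙ]`-modules in the paper's left-to-right
convention.) -/
def NDF (n : ℕ) : Type := {f : Fin n → Fin n // Monotone f}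

instance (n : ℕ) : Monoid (NDF n) where
  mul f g := ⟨f.1 ∘ g.1, f.2.comp g.2⟩
  one := ⟨id, monotone_id⟩
  mul_assoc _ _ _ := Subtype.ext rfl
  one_mul _ := Subtype.ext rfl
  mul_one _ := Subtype.ext rfl

/-- The action of `NDFₙ` on the exterior power `Λ^k ℂ^n`, as a monoid morphism into
`End(Λ^k ℂ^n)`. -/
def TN (n k : ℕ) : NDF n →* Module.End ℂ (ExtP n k) where
  toFun f := actOp n k f.1
  map_one' := actOp_id n k
  map_mul' f g := actOp_comp n k f.1 g.1

noncomputable instance endApplyExt (n k : ℕ) :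
    Module (Module.End ℂ (ExtP n k)) (ExtP n k) :=
  Module.End.applyModule

/-- `Λ^k ℂ^n` as a module over the monoid algebra `ℂ[NDFₙ]`. -/
noncomputable instance extModule (n k : ℕ) :
    Module (MonoidAlgebra ℂ (NDF n)) (ExtP n k) :=
  Module.compHom _
    (MonoidAlgebra.lift ℂ (Module.End ℂ (ExtP n k)) (NDF n) (TN n k)).toRingHom

/-- The space `Hom_{ℂ[NDFₙ]}(Λ^k ℂ^n, Λ^l ℂ^n)`: the `ℂ`-linear maps commuting with
the action of every non-decreasing function. -/
def HomND (n k l : ℕ) : Submodule ℂ (ExtP n k →ₗ[ℂ] ExtP n l) where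
  carrier := {φ | ∀ f : NDF n, φ.comp (actOp n k f.1) = (actOp n l f.1).comp φ}
  add_mem' := by
    intro φ ψ hφ hψ f
    rw [LinearMap.add_comp, LinearMap.comp_add, hφ f, hψ f]
  zero_mem' := by
    intro f
    rw [LinearMap.zero_comp, LinearMap.comp_zero]
  smul_mem' := by
    intro c φ hφ f
    rw [LinearMap.smul_comp, LinearMap.comp_smul, hφ f]

-- Helper instances, to avoid very deep instance searches.
noncomputable instance (priority := 10000) extHomACG (n k l : ℕ) :
    AddCommGroup (ExtP n k →ₗ[ℂ] ExtP n l) :=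
  LinearMap.addCommGroup

noncomputable instance (priority := 10000) extHomSubACG (n k l : ℕ)
    (N : Submodule ℂ (ExtP n k →ₗ[ℂ] ExtP n l)) : AddCommGroup ↥N :=
  @Submodule.addCommGroup ℂ (ExtP n k →ₗ[ℂ] ExtP n l) _ _ _ N

/-!
Write `φ(e_S) = ∑_T φ_{S,T} e_T`. Equivariance under the monotone retraction onto `S` fixes
`e_S`, hence `φ_{S,T} = 0` unless `T ⊆ S`; equivariance under monotone maps injective on `S`
shows that `φ_{S,T}` only depends on the position of `T` inside `S`. If `a < b` are consecutive
in `S`, the retraction onto `S ∖ {b}` merges `b` into `a` and so kills `e_S`; comparing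
coefficients gives `φ_{S,U} = 0` when `a, b ∉ U`, and `φ_{S,U} = -φ_{S,U-a+b}` when `a ∈ U`,
`b ∉ U`. When `|S ∖ T| ≥ 2` these relations move `T` down to a vanishing coefficient, so only
`l ∈ {k, k - 1}` survive. For `l = k` the one coefficient `φ_{S,S}` is constant, so `φ` is a
scalar. For `l = k - 1` the coefficients `φ_{S,S∖b}` alternate in sign along `S`, so `φ` is a
multiple of the boundary map `e_S ↦ ∑_b (-1)^{#{x ∈ S | x < b}} e_{S∖b}`; this map is
equivariant because a monotone map that is not injective on `S` merges two consecutive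
elements of `S`, and the two surviving terms cancel.
-/

abbrev Subsets (n k : ℕ) := {S : Finset (Fin n) // S.card = k}

lemma Subsets.nonempty {n k : ℕ} (hkn : k ≤ n) : Nonempty (Subsets n k) :=
  let ⟨S, _, hS⟩ :=
    Finset.exists_subset_card_eq (s := (Finset.univ : Finset (Fin n))) (by simpa)
  ⟨⟨S, hS⟩⟩

namespace ExtP

variable {n k : ℕ}

def single (k : ℕ) (T : Finset (Fin n)) : ExtP n k :=
  if h : T.card = k then Finsupp.single ⟨T, h⟩ 1 else 0

lemma single_apply (T : Finset (Fin n)) (U : Subsets n k) :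
    single k T U = if T = U.1 then 1 else 0 := by
  unfold single
  split_ifs with hT hTU hTU
  · simp [hTU]
  · simp [Subtype.ext_iff, hTU]
  · exact absurd (hTU ▸ U.2) hT
  · rfl

lemma single_val (S : Subsets n k) : single k S.1 = Finsupp.single S 1 := dif_pos S.2

lemma single_of_card_ne {T : Finset (Fin n)} (hT : T.card ≠ k) : single k T = 0 := dif_neg hT

end ExtP

section Action

variable {n k : ℕ}

lemma actOp_single_val (g : Fin n → Fin n) (S : Subsets n k) :
    actOp n k g (Finsupp.single S 1) = ExtP.single k (S.1.image g) :=
  actOp_single n k g S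

lemma actOp_apply (g : Fin n → Fin n) (v : ExtP n k) (U : Subsets n k) :
    actOp n k g v U = ∑ T with T.1.image g = U.1, v T := by
  have hv : v = ∑ T, v T • Finsupp.single T 1 := by
    simp_rw [Finsupp.smul_single_one, Finsupp.univ_sum_single]
  conv_lhs => rw [hv, map_sum]
  simp only [map_smul, actOp_single_val, Finsupp.coe_finsetSum, Finset.sum_apply,
    Finsupp.smul_apply, ExtP.single_apply, smul_eq_mul, mul_ite, mul_one, mul_zero,
    Finset.sum_filter]

lemma actOp_single_of_card (g : Fin n → Fin n) {T : Finset (Fin n)} (hT : T.card = k) :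
    actOp n k g (ExtP.single k T) = ExtP.single k (T.image g) := by
  rw [ExtP.single, dif_pos hT]
  exact actOp_single_val g ⟨T, hT⟩

end Action

namespace Finset

variable {α β : Type*} [LinearOrder α] [LinearOrder β] {S T : Finset α} {a b x y : α}

def roundDown (S : Finset α) (hS : S.Nonempty) (x : α) : α :=
  if h : {y ∈ S | y ≤ x}.Nonempty then {y ∈ S | y ≤ x}.max' h else S.min' hS

lemma roundDown_mem (hS : S.Nonempty) (x : α) : S.roundDown hS x ∈ S := by
  unfold roundDown
  split_ifs with h
  · exact (mem_filter.1 (max'_mem _ h)).1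
  · exact S.min'_mem hS

lemma monotone_roundDown (hS : S.Nonempty) : Monotone (S.roundDown hS) := by
  intro x y hxy
  have hsub : {z ∈ S | z ≤ x} ⊆ {z ∈ S | z ≤ y} :=
    fun z hz => mem_filter.2 ⟨(mem_filter.1 hz).1, (mem_filter.1 hz).2.trans hxy⟩
  unfold roundDown
  split_ifs with hx hy hy
  · exact max'_subset _ hsub
  · exact absurd (hx.mono hsub) hy
  · exact S.min'_le _ (mem_filter.1 (max'_mem _ hy)).1
  · exact le_rfl

lemma roundDown_of_mem (hS : S.Nonempty) (hx : x ∈ S) : S.roundDown hS x = x := by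
  have hmem : x ∈ {y ∈ S | y ≤ x} := mem_filter.2 ⟨hx, le_rfl⟩
  rw [roundDown, dif_pos ⟨x, hmem⟩]
  exact le_antisymm (max'_le _ _ _ fun y hy => (mem_filter.1 hy).2) (le_max' _ _ hmem)

lemma image_roundDown_of_subset (hS : S.Nonempty) (hT : T ⊆ S) :
    T.image (S.roundDown hS) = T := by
  conv_rhs => rw [← image_id (s := T)]
  exact image_congr fun x hx => roundDown_of_mem hS (hT hx)

lemma image_roundDown_subset (hS : S.Nonempty) (T : Finset α) : T.image (S.roundDown hS) ⊆ S :=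
  image_subset_iff.2 fun x _ => roundDown_mem hS x

structure Consecutive (S : Finset α) (a b : α) : Prop where
  left_mem : a ∈ S
  right_mem : b ∈ S
  lt : a < b
  le_of_lt : ∀ x ∈ S, a < x → b ≤ x

lemma exists_consecutive_right (ha : a ∈ S) (hy : y ∈ S) (hay : a < y) :
    ∃ b, S.Consecutive a b := by
  have hne : {x ∈ S | a < x}.Nonempty := ⟨y, mem_filter.2 ⟨hy, hay⟩⟩
  obtain ⟨hbS, hab⟩ := mem_filter.1 ({x ∈ S | a < x}.min'_mem hne)
  exact ⟨_, ha, hbS, hab, fun x hx hax => min'_le _ _ (mem_filter.2 ⟨hx, hax⟩)⟩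

lemma exists_consecutive_left (hb : b ∈ S) (hx : x ∈ S) (hxb : x < b) :
    ∃ a, S.Consecutive a b := by
  have hne : {y ∈ S | y < b}.Nonempty := ⟨x, mem_filter.2 ⟨hx, hxb⟩⟩
  obtain ⟨haS, hab⟩ := mem_filter.1 ({y ∈ S | y < b}.max'_mem hne)
  refine ⟨_, haS, hb, hab, fun y hy hay => ?_⟩
  by_contra! hyb
  exact (le_max' _ y (mem_filter.2 ⟨hy, hyb⟩)).not_gt hay

namespace Consecutive

lemma erase_nonempty (h : S.Consecutive a b) : (S.erase b).Nonempty :=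
  ⟨a, mem_erase.2 ⟨h.lt.ne, h.left_mem⟩⟩

lemma roundDown_erase (h : S.Consecutive a b) : (S.erase b).roundDown h.erase_nonempty b = a := by
  have hmem : a ∈ {y ∈ S.erase b | y ≤ b} :=
    mem_filter.2 ⟨mem_erase.2 ⟨h.lt.ne, h.left_mem⟩, h.lt.le⟩
  rw [roundDown, dif_pos ⟨a, hmem⟩]
  refine le_antisymm (max'_le _ _ _ fun y hy => ?_) (le_max' _ _ hmem)
  obtain ⟨hyS', hyb'⟩ := mem_filter.1 hy
  obtain ⟨hyb, hyS⟩ := mem_erase.1 hyS'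
  by_contra! hay
  exact (h.le_of_lt y hyS hay).not_gt (lt_of_le_of_ne hyb' hyb)

lemma image_roundDown_erase (h : S.Consecutive a b) (hT : T ⊆ S) (hbT : b ∈ T) :
    T.image ((S.erase b).roundDown h.erase_nonempty) = insert a (T.erase b) := by
  conv_lhs => rw [← insert_erase hbT]
  rw [image_insert, h.roundDown_erase, image_roundDown_of_subset _ (erase_subset_erase b hT)]

end Consecutive

lemma exists_monotone_image_eq (hS : S.Nonempty) (h : S.card = T.card) :
    ∃ g : α → α, Monotone g ∧ S.image g = T := by
  let e := S.orderIsoOfFin rfl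
  let e' := T.orderIsoOfFin h.symm
  refine ⟨fun x => (e' (e.symm ⟨S.roundDown hS x, roundDown_mem hS x⟩)).1, ?_, ?_⟩
  · exact fun x y hxy =>
      e'.monotone (e.symm.monotone (Subtype.mk_le_mk.2 (monotone_roundDown hS hxy)))
  · refine Subset.antisymm (image_subset_iff.2 fun x _ => (e' _).2) fun y hy => ?_
    refine mem_image.2 ⟨e (e'.symm ⟨y, hy⟩), (e _).2, ?_⟩
    simp only [roundDown_of_mem hS (e _).2, Subtype.coe_eta, OrderIso.symm_apply_apply,
      OrderIso.apply_symm_apply]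

lemma image_erase_of_injOn {g : α → α} (hg : Set.InjOn g S) (hT : T ⊆ S) (hb : b ∈ T) :
    (T.erase b).image g = (T.image g).erase (g b) := by
  ext y
  simp only [mem_image, mem_erase]
  constructor
  · rintro ⟨x, ⟨hxb, hxT⟩, rfl⟩
    exact ⟨fun hc => hxb (hg (hT hxT) (hT hb) hc), x, hxT, rfl⟩
  · rintro ⟨hyb, x, hx, rfl⟩
    exact ⟨x, ⟨fun hc => hyb (by rw [hc]), hx⟩, rfl⟩

lemma image_erase_of_apply_eq {g : α → α} (ha : a ∈ S) (hab : a ≠ b) (h : g a = g b) :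
    (S.erase b).image g = S.image g := by
  refine Subset.antisymm (image_subset_image (erase_subset b S)) fun y hy => ?_
  obtain ⟨x, hx, rfl⟩ := mem_image.1 hy
  rcases eq_or_ne x b with rfl | hxb
  · exact mem_image.2 ⟨a, mem_erase.2 ⟨hab, ha⟩, h⟩
  · exact mem_image_of_mem g (mem_erase.2 ⟨hxb, hx⟩)

lemma exists_consecutive_of_not_injOn {g : α → α} (hg : Monotone g) (h : ¬ Set.InjOn g S) :
    ∃ a b, S.Consecutive a b ∧ g a = g b := by
  obtain ⟨x, hx, y, hy, hxy, hne⟩ : ∃ x ∈ S, ∃ y ∈ S, g x = g y ∧ x ≠ y := by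
    simpa [Set.InjOn] using h
  wlog hlt : x < y generalizing x y
  · exact this y hy x hx hxy.symm hne.symm (lt_of_le_of_ne (not_lt.1 hlt) hne.symm)
  obtain ⟨b, hb⟩ := exists_consecutive_right hx hy hlt
  exact ⟨x, b, hb, le_antisymm (hg hb.lt.le) (hxy ▸ hg (hb.le_of_lt y hy hlt))⟩

def posSign (S : Finset α) (b : α) : ℤ := (-1) ^ #{x ∈ S | x < b}

lemma posSign_min' (hS : S.Nonempty) : S.posSign (S.min' hS) = 1 := by
  rw [posSign, filter_eq_empty_iff.2 fun x hx => not_lt.2 (S.min'_le x hx), card_empty, pow_zero]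

lemma Consecutive.posSign_right (h : S.Consecutive a b) : S.posSign b = - S.posSign a := by
  have hfilter : {x ∈ S | x < b} = insert a {x ∈ S | x < a} := by
    ext x
    simp only [mem_filter, mem_insert]
    constructor
    · rintro ⟨hxS, hxb⟩
      rcases lt_trichotomy x a with hxa | rfl | hax
      · exact Or.inr ⟨hxS, hxa⟩
      · exact Or.inl rfl
      · exact absurd (h.le_of_lt x hxS hax) (not_le.2 hxb)
    · rintro (rfl | ⟨hxS, hxa⟩)
      · exact ⟨h.left_mem, h.lt⟩
      · exact ⟨hxS, hxa.trans h.lt⟩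
  rw [posSign, posSign, hfilter, card_insert_of_notMem (by simp), pow_succ, mul_neg_one]

lemma posSign_image {g : α → β} (hg : Monotone g) (hinj : Set.InjOn g S) (hb : b ∈ S) :
    (S.image g).posSign (g b) = S.posSign b := by
  have hfilter : {y ∈ S.image g | y < g b} = {x ∈ S | x < b}.image g := by
    ext y
    simp only [mem_filter, mem_image]
    constructor
    · rintro ⟨⟨x, hx, rfl⟩, hlt⟩
      exact ⟨x, ⟨hx, lt_of_not_ge fun hbx => hlt.not_ge (hg hbx)⟩, rfl⟩
    · rintro ⟨x, ⟨hx, hxb⟩, rfl⟩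
      exact ⟨⟨x, hx, rfl⟩, lt_of_le_of_ne (hg hxb.le) fun he => hxb.ne (hinj hx hb he)⟩
  rw [posSign, posSign, hfilter, card_image_of_injOn (hinj.mono fun x hx => (mem_filter.1 hx).1)]

end Finset

lemma id_mem_homND {n k : ℕ} : (LinearMap.id : ExtP n k →ₗ[ℂ] ExtP n k) ∈ HomND n k k :=
  fun _ => by rw [LinearMap.id_comp, LinearMap.comp_id]

namespace HomND

section

variable {n k l : ℕ} {φ : ExtP n k →ₗ[ℂ] ExtP n l} {g : Fin n → Fin n}
  {S : Subsets n k} {T U V : Subsets n l} {a b : Fin n}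

lemma map_actOp (hφ : φ ∈ HomND n k l) (hg : Monotone g) (v : ExtP n k) :
    φ (actOp n k g v) = actOp n l g (φ v) :=
  LinearMap.congr_fun (hφ ⟨g, hg⟩) v

lemma apply_single_image (hφ : φ ∈ HomND n k l) (hg : Monotone g) (S : Subsets n k)
    (U : Subsets n l) :
    φ (ExtP.single k (S.1.image g)) U =
      ∑ T with T.1.image g = U.1, φ (Finsupp.single S 1) T := by
  rw [← actOp_single_val, map_actOp hφ hg, actOp_apply]

lemma apply_single_eq_zero_of_not_subset (hφ : φ ∈ HomND n k l) (hS : S.1.Nonempty)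
    (hU : ¬ U.1 ⊆ S.1) : φ (Finsupp.single S 1) U = 0 := by
  have h := apply_single_image hφ (Finset.monotone_roundDown hS) S U
  rw [Finset.image_roundDown_of_subset hS subset_rfl, ExtP.single_val] at h
  rw [h]
  refine Finset.sum_eq_zero fun T hT => absurd ?_ hU
  exact (Finset.mem_filter.1 hT).2 ▸ Finset.image_roundDown_subset hS T.1

lemma apply_single_image_of_image_eq (hφ : φ ∈ HomND n k l) (hg : Monotone g)
    (hS : S.1.Nonempty) (hcard : (S.1.image g).card = k) (hTS : T.1 ⊆ S.1)
    (hU : T.1.image g = U.1) : φ (ExtP.single k (S.1.image g)) U = φ (Finsupp.single S 1) T := by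
  have hinj : Set.InjOn g S.1 := Finset.card_image_iff.1 (hcard.trans S.2.symm)
  rw [apply_single_image hφ hg,
    Finset.sum_eq_single_of_mem T (Finset.mem_filter.2 ⟨Finset.mem_univ _, hU⟩)]
  intro T' hT' hne
  by_cases hT'S : T'.1 ⊆ S.1
  · exact absurd (Subtype.ext ((Finset.image_eq_image_iff_of_injOn hinj hT'S hTS).1
      ((Finset.mem_filter.1 hT').2.trans hU.symm))) hne
  · exact apply_single_eq_zero_of_not_subset hφ hS hT'S

lemma sum_image_roundDown_erase_eq_zero (hφ : φ ∈ HomND n k l) (hab : S.1.Consecutive a b)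
    (U : Subsets n l) :
    ∑ T with T.1.image ((S.1.erase b).roundDown hab.erase_nonempty) = U.1,
      φ (Finsupp.single S 1) T = 0 := by
  have himage : S.1.image ((S.1.erase b).roundDown hab.erase_nonempty) = S.1.erase b := by
    rw [hab.image_roundDown_erase subset_rfl hab.right_mem,
      Finset.insert_eq_self.2 (Finset.mem_erase.2 ⟨hab.lt.ne, hab.left_mem⟩)]
  have hcard : (S.1.erase b).card ≠ k := by
    rw [Finset.card_erase_of_mem hab.right_mem, S.2]
    have := Finset.card_pos.2 ⟨b, hab.right_mem⟩
    omega
  rw [← apply_single_image hφ (Finset.monotone_roundDown _), himage,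
    ExtP.single_of_card_ne hcard, map_zero, Finsupp.coe_zero, Pi.zero_apply]

lemma apply_single_eq_zero_of_consecutive (hφ : φ ∈ HomND n k l) (hab : S.1.Consecutive a b)
    (hUS : U.1 ⊆ S.1) (ha : a ∉ U.1) (hb : b ∉ U.1) : φ (Finsupp.single S 1) U = 0 := by
  have hUb : U.1 ⊆ S.1.erase b := Finset.subset_erase.2 ⟨hUS, hb⟩
  have h := sum_image_roundDown_erase_eq_zero hφ hab U
  rwa [Finset.sum_eq_single_of_mem U
    (Finset.mem_filter.2 ⟨Finset.mem_univ _, Finset.image_roundDown_of_subset _ hUb⟩)] at h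
  intro T hT hTU
  have hTimage := (Finset.mem_filter.1 hT).2
  by_cases hTS : T.1 ⊆ S.1
  swap
  · exact apply_single_eq_zero_of_not_subset hφ ⟨b, hab.right_mem⟩ hTS
  by_cases hbT : b ∈ T.1
  · rw [hab.image_roundDown_erase hTS hbT] at hTimage
    exact absurd (hTimage ▸ Finset.mem_insert_self a _) ha
  · rw [Finset.image_roundDown_of_subset _ (Finset.subset_erase.2 ⟨hTS, hbT⟩)] at hTimage
    exact absurd (Subtype.ext hTimage) hTU

lemma apply_single_add_apply_single_eq_zero (hφ : φ ∈ HomND n k l)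
    (hab : S.1.Consecutive a b) (hUS : U.1 ⊆ S.1) (ha : a ∈ U.1) (hb : b ∉ U.1)
    (hV : V.1 = insert b (U.1.erase a)) :
    φ (Finsupp.single S 1) U + φ (Finsupp.single S 1) V = 0 := by
  have hUb : U.1 ⊆ S.1.erase b := Finset.subset_erase.2 ⟨hUS, hb⟩
  have hVS : V.1 ⊆ S.1 :=
    hV ▸ Finset.insert_subset hab.right_mem ((Finset.erase_subset _ _).trans hUS)
  have hbV : b ∈ V.1 := hV ▸ Finset.mem_insert_self b _
  have haV : a ∉ V.1.erase b := by
    rw [hV, Finset.erase_insert fun h => hb (Finset.mem_of_mem_erase h)]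
    exact Finset.notMem_erase a _
  have hVimage : V.1.image ((S.1.erase b).roundDown hab.erase_nonempty) = U.1 := by
    rw [hab.image_roundDown_erase hVS hbV, hV,
      Finset.erase_insert fun h => hb (Finset.mem_of_mem_erase h), Finset.insert_erase ha]
  have h := sum_image_roundDown_erase_eq_zero hφ hab U
  rwa [Finset.sum_eq_add_of_mem U V
    (Finset.mem_filter.2 ⟨Finset.mem_univ _, Finset.image_roundDown_of_subset _ hUb⟩)
    (Finset.mem_filter.2 ⟨Finset.mem_univ _, hVimage⟩)
    (fun h => hb (h ▸ hbV))] at h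
  rintro T hT ⟨hTU, hTV⟩
  have hTimage := (Finset.mem_filter.1 hT).2
  by_cases hTS : T.1 ⊆ S.1
  swap
  · exact apply_single_eq_zero_of_not_subset hφ ⟨b, hab.right_mem⟩ hTS
  by_cases hbT : b ∈ T.1
  · rw [hab.image_roundDown_erase hTS hbT] at hTimage
    have haT : a ∉ T.1.erase b := by
      intro haT
      have hcard := congrArg Finset.card hTimage
      rw [Finset.insert_eq_self.2 haT, Finset.card_erase_of_mem hbT, T.2, U.2] at hcard
      have := Finset.card_pos.2 ⟨b, hbT⟩
      omega
    refine absurd (Subtype.ext ?_) hTV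
    rw [hV, ← hTimage, Finset.erase_insert haT, Finset.insert_erase hbT]
  · rw [Finset.image_roundDown_of_subset _ (Finset.subset_erase.2 ⟨hTS, hbT⟩)] at hTimage
    exact absurd (Subtype.ext hTimage) hTU

lemma apply_single_eq_zero_of_card_add_two_le (hφ : φ ∈ HomND n k l) (hlk : l + 2 ≤ k)
    {S : Subsets n k} {T : Subsets n l} (hTS : T.1 ⊆ S.1) : φ (Finsupp.single S 1) T = 0 := by
  -- Trading `s ∈ T` for the smaller `a ∉ T` lowers `∑ x ∈ T, x`.
  induction hm : ∑ x ∈ T.1, (x : ℕ) using Nat.strong_induction_on generalizing T with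
  | _ m ih =>
  obtain ⟨x, hx, y, hy, hxy⟩ := Finset.one_lt_card.1
    (by rw [Finset.card_sdiff_of_subset hTS, S.2, T.2]; omega : 1 < (S.1 \ T.1).card)
  obtain ⟨a, ha, y, hy, hay⟩ : ∃ a ∈ S.1 \ T.1, ∃ y ∈ S.1 \ T.1, a < y := by
    rcases hxy.lt_or_gt with h | h
    exacts [⟨x, hx, y, hy, h⟩, ⟨y, hy, x, hx, h⟩]
  obtain ⟨haS, haT⟩ := Finset.mem_sdiff.1 ha
  obtain ⟨s, has⟩ := Finset.exists_consecutive_right haS (Finset.mem_sdiff.1 hy).1 hay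
  by_cases hsT : s ∈ T.1
  swap
  · exact apply_single_eq_zero_of_consecutive hφ has hTS haT hsT
  have haT' : a ∉ T.1.erase s := fun h => haT (Finset.mem_of_mem_erase h)
  let T' : Subsets n l := ⟨insert a (T.1.erase s), by
    rw [Finset.card_insert_of_notMem haT', Finset.card_erase_of_mem hsT, T.2]
    have := Finset.card_pos.2 ⟨s, hsT⟩
    omega⟩
  have hT'S : T'.1 ⊆ S.1 := Finset.insert_subset haS ((Finset.erase_subset _ _).trans hTS)
  have hsum := apply_single_add_apply_single_eq_zero hφ has hT'S (Finset.mem_insert_self a _)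
    (by simp [T', has.lt.ne']) (V := T)
    (by rw [Finset.erase_insert haT', Finset.insert_erase hsT])
  have hlt : ∑ x ∈ T'.1, (x : ℕ) < m := by
    rw [← hm, Finset.sum_insert haT', ← Finset.add_sum_erase _ _ hsT]
    exact Nat.add_lt_add_right has.lt _
  rwa [ih _ hlt hT'S rfl, zero_add] at hsum

lemma eq_zero_of_ne_of_add_one_ne (hφ : φ ∈ HomND n k l) (hk : k ≠ 0) (hlk : l ≠ k)
    (hlk' : l + 1 ≠ k) : φ = 0 := by
  ext S T
  simp only [LinearMap.comp_apply, Finsupp.lsingle_apply, LinearMap.zero_apply,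
    Finsupp.coe_zero, Pi.zero_apply]
  by_cases hTS : T.1 ⊆ S.1
  · have := T.2 ▸ S.2 ▸ Finset.card_le_card hTS
    exact apply_single_eq_zero_of_card_add_two_le hφ (by omega) hTS
  · exact apply_single_eq_zero_of_not_subset hφ (Finset.card_pos.1 (by rw [S.2]; omega)) hTS

end

section

variable {n k : ℕ} {φ : ExtP n k →ₗ[ℂ] ExtP n k}

lemma apply_single_self_eq (hφ : φ ∈ HomND n k k)
    {S : Subsets n k} (hS : S.1.Nonempty) (S' : Subsets n k) :
    φ (Finsupp.single S' 1) S' = φ (Finsupp.single S 1) S := by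
  obtain ⟨g, hg, hgS⟩ := Finset.exists_monotone_image_eq hS (S.2.trans S'.2.symm)
  rw [← apply_single_image_of_image_eq hφ hg hS (hgS ▸ S'.2) subset_rfl hgS, hgS,
    ExtP.single_val]

lemma apply_single_eq_zero_of_ne (hφ : φ ∈ HomND n k k)
    {S U : Subsets n k} (hS : S.1.Nonempty) (hU : U ≠ S) : φ (Finsupp.single S 1) U = 0 := by
  refine apply_single_eq_zero_of_not_subset hφ hS fun hUS => hU (Subtype.ext ?_)
  exact Finset.eq_of_subset_of_card_le hUS (S.2.trans U.2.symm).le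

lemma exists_eq_smul_id (hφ : φ ∈ HomND n k k) (hk : k ≠ 0) :
    ∃ c : ℂ, φ = c • LinearMap.id := by
  rcases isEmpty_or_nonempty (Subsets n k) with h | ⟨⟨S₀⟩⟩
  · exact ⟨0, by ext S; exact h.elim S⟩
  have hne (S : Subsets n k) : S.1.Nonempty := Finset.card_pos.1 (by omega)
  refine ⟨φ (Finsupp.single S₀ 1) S₀, ?_⟩
  ext S U
  simp only [LinearMap.comp_apply, Finsupp.lsingle_apply, LinearMap.smul_apply,
    LinearMap.id_apply, Finsupp.smul_apply, Finsupp.single_apply]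
  split_ifs with hSU
  · rw [← hSU, smul_eq_mul, mul_one, apply_single_self_eq hφ (hne S₀)]
  · rw [smul_zero, apply_single_eq_zero_of_ne hφ (hne S) (Ne.symm hSU)]

end

end HomND

def boundary (n l : ℕ) : ExtP n (l + 1) →ₗ[ℂ] ExtP n l :=
  Finsupp.linearCombination ℂ fun S =>
    ∑ b ∈ S.1, S.1.posSign b • ExtP.single l (S.1.erase b)

section Boundary

variable {n l : ℕ}

lemma boundary_single_of_card {T : Finset (Fin n)} (hT : T.card = l + 1) :
    boundary n l (ExtP.single (l + 1) T) =
      ∑ b ∈ T, T.posSign b • ExtP.single l (T.erase b) := by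
  rw [ExtP.single, dif_pos hT, boundary, Finsupp.linearCombination_single, one_smul]

lemma boundary_single_apply_erase (S : Subsets n (l + 1)) {b : Fin n} (hb : b ∈ S.1)
    {U : Subsets n l} (hU : U.1 = S.1.erase b) :
    boundary n l (Finsupp.single S 1) U = S.1.posSign b := by
  rw [← ExtP.single_val, boundary_single_of_card S.2, Finsupp.finsetSum_apply,
    Finset.sum_eq_single_of_mem b hb]
  · simp [ExtP.single_apply, hU]
  · intro c hc hcb
    rw [Finsupp.smul_apply, ExtP.single_apply, if_neg, smul_zero]
    rw [hU, Finset.erase_inj _ hc]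
    exact hcb

lemma boundary_single_image_of_injOn {g : Fin n → Fin n} (hg : Monotone g) {S : Finset (Fin n)}
    (hinj : Set.InjOn g S) (hS : S.card = l + 1) :
    boundary n l (ExtP.single (l + 1) (S.image g))
      = ∑ b ∈ S, S.posSign b • ExtP.single l ((S.erase b).image g) := by
  rw [boundary_single_of_card ((Finset.card_image_of_injOn hinj).trans hS), Finset.sum_image hinj]
  refine Finset.sum_congr rfl fun b hb => ?_
  rw [Finset.posSign_image hg hinj hb, Finset.image_erase_of_injOn hinj subset_rfl hb]

lemma sum_posSign_smul_single_image_erase_eq_zero {g : Fin n → Fin n} (hg : Monotone g)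
    {S : Finset (Fin n)} (hinj : ¬ Set.InjOn g S) (hS : S.card = l + 1) :
    ∑ b ∈ S, S.posSign b • ExtP.single l ((S.erase b).image g) = 0 := by
  obtain ⟨p, q, hpq, hgpq⟩ := Finset.exists_consecutive_of_not_injOn hg hinj
  rw [Finset.sum_eq_add_of_mem p q hpq.left_mem hpq.right_mem hpq.lt.ne, hpq.posSign_right,
    Finset.image_erase_of_apply_eq hpq.right_mem hpq.lt.ne' hgpq.symm,
    Finset.image_erase_of_apply_eq hpq.left_mem hpq.lt.ne hgpq, neg_smul, add_neg_cancel]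
  rintro b hb ⟨hbp, hbq⟩
  have hcard : ((S.erase b).image g).card ≠ l := by
    intro h
    have hinj' := Finset.card_image_iff.1 (h.trans (by rw [Finset.card_erase_of_mem hb, hS]; rfl))
    exact hpq.lt.ne (hinj' (Finset.mem_erase.2 ⟨Ne.symm hbp, hpq.left_mem⟩)
      (Finset.mem_erase.2 ⟨Ne.symm hbq, hpq.right_mem⟩) hgpq)
  rw [ExtP.single_of_card_ne hcard, smul_zero]

lemma boundary_mem_homND : boundary n l ∈ HomND n (l + 1) l := by
  intro f
  ext S : 2
  have hact (b) (hb : b ∈ S.1) :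
      actOp n l f.1 (ExtP.single l (S.1.erase b)) = ExtP.single l ((S.1.erase b).image f.1) := by
    rw [actOp_single_of_card _ (by rw [Finset.card_erase_of_mem hb, S.2, Nat.add_sub_cancel])]
  simp only [LinearMap.comp_apply, Finsupp.lsingle_apply]
  rw [actOp_single_val, ← ExtP.single_val, boundary_single_of_card S.2, map_sum]
  rw [Finset.sum_congr rfl fun b hb => by rw [map_zsmul, hact b hb]]
  by_cases hinj : Set.InjOn f.1 S.1
  · exact boundary_single_image_of_injOn f.2 hinj S.2
  · rw [sum_posSign_smul_single_image_erase_eq_zero f.2 hinj S.2,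
      ExtP.single_of_card_ne fun h => hinj (Finset.card_image_iff.1 (h.trans S.2.symm)), map_zero]

lemma boundary_ne_zero [Nonempty (Subsets n (l + 1))] : boundary n l ≠ 0 := by
  obtain ⟨S⟩ := ‹Nonempty (Subsets n (l + 1))›
  have hS : S.1.Nonempty := Finset.card_pos.1 (by rw [S.2]; omega)
  have hmem := S.1.min'_mem hS
  intro h
  have := boundary_single_apply_erase S hmem (U := ⟨S.1.erase (S.1.min' hS),
    by rw [Finset.card_erase_of_mem hmem, S.2]; rfl⟩) rfl
  rw [h, Finset.posSign_min'] at this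
  simp at this

end Boundary

namespace HomND

variable {n l : ℕ} {φ : ExtP n (l + 1) →ₗ[ℂ] ExtP n l}

lemma apply_single_erase_min'_eq (hφ : φ ∈ HomND n (l + 1) l)
    {S S' : Subsets n (l + 1)} {U U' : Subsets n l} (hS : S.1.Nonempty) (hS' : S'.1.Nonempty)
    (hU : U.1 = S.1.erase (S.1.min' hS)) (hU' : U'.1 = S'.1.erase (S'.1.min' hS')) :
    φ (Finsupp.single S' 1) U' = φ (Finsupp.single S 1) U := by
  obtain ⟨g, hg, hgS⟩ := Finset.exists_monotone_image_eq hS (S.2.trans S'.2.symm)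
  have hinj : Set.InjOn g S.1 := Finset.card_image_iff.1 (by rw [hgS, S.2, S'.2])
  have hmin : g (S.1.min' hS) = S'.1.min' hS' := by
    simp only [← hgS, Finset.min'_image hg]
  have hUg : U.1.image g = U'.1 := by
    rw [hU, Finset.image_erase_of_injOn hinj subset_rfl (S.1.min'_mem hS), hgS, hmin, hU']
  rw [← apply_single_image_of_image_eq hφ hg hS (hgS ▸ S'.2) (hU ▸ Finset.erase_subset _ _)
    hUg, hgS, ExtP.single_val]

lemma apply_single_erase_eq_zero (hφ : φ ∈ HomND n (l + 1) l)
    {S : Subsets n (l + 1)} (hS : S.1.Nonempty)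
    (hmin : ∀ U : Subsets n l, U.1 = S.1.erase (S.1.min' hS) → φ (Finsupp.single S 1) U = 0)
    (b : Fin n) (hb : b ∈ S.1) (U : Subsets n l) (hU : U.1 = S.1.erase b) :
    φ (Finsupp.single S 1) U = 0 := by
  induction b using WellFoundedLT.induction generalizing U with
  | ind b ih =>
  rcases eq_or_lt_of_le (S.1.min'_le b hb) with hb_min | hb_min
  · exact hmin U (hb_min ▸ hU)
  obtain ⟨a, hab⟩ := Finset.exists_consecutive_left hb (S.1.min'_mem hS) hb_min
  have hV : (S.1.erase a).card = l := by rw [Finset.card_erase_of_mem hab.left_mem, S.2]; rfl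
  have hsum := apply_single_add_apply_single_eq_zero hφ hab (V := ⟨S.1.erase a, hV⟩)
    (hU ▸ Finset.erase_subset _ _) (hU ▸ Finset.mem_erase.2 ⟨hab.lt.ne, hab.left_mem⟩)
    (hU ▸ Finset.notMem_erase b _)
    (by rw [hU, Finset.erase_right_comm, Finset.insert_erase
      (Finset.mem_erase.2 ⟨hab.lt.ne', hab.right_mem⟩)])
  rwa [ih a hab.lt hab.left_mem ⟨S.1.erase a, hV⟩ rfl, add_zero] at hsum

lemma eq_zero_of_apply_single_erase_min' (hφ : φ ∈ HomND n (l + 1) l)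
    {S₀ : Subsets n (l + 1)} {U₀ : Subsets n l}
    (hS₀ : S₀.1.Nonempty) (hU₀ : U₀.1 = S₀.1.erase (S₀.1.min' hS₀))
    (h₀ : φ (Finsupp.single S₀ 1) U₀ = 0) : φ = 0 := by
  ext S U
  have hS : S.1.Nonempty := Finset.card_pos.1 (by rw [S.2]; omega)
  simp only [LinearMap.comp_apply, Finsupp.lsingle_apply, LinearMap.zero_apply,
    Finsupp.coe_zero, Pi.zero_apply]
  by_cases hUS : U.1 ⊆ S.1
  · obtain ⟨b, hbU, hbS⟩ := Finset.exists_eq_insert_iff.2 ⟨hUS, by rw [U.2, S.2]⟩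
    refine apply_single_erase_eq_zero hφ hS (fun U' hU' => ?_) b
      (hbS ▸ Finset.mem_insert_self b _) U (by rw [← hbS, Finset.erase_insert hbU])
    rw [apply_single_erase_min'_eq hφ hS₀ hS hU₀ hU', h₀]
  · exact apply_single_eq_zero_of_not_subset hφ hS hUS

lemma exists_eq_smul_boundary (hφ : φ ∈ HomND n (l + 1) l) :
    ∃ c : ℂ, φ = c • boundary n l := by
  rcases isEmpty_or_nonempty (Subsets n (l + 1)) with h | ⟨⟨S₀⟩⟩
  · exact ⟨0, by ext S; exact h.elim S⟩
  have hS₀ : S₀.1.Nonempty := Finset.card_pos.1 (by rw [S₀.2]; omega)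
  have hmem := S₀.1.min'_mem hS₀
  let U₀ : Subsets n l :=
    ⟨S₀.1.erase (S₀.1.min' hS₀), by rw [Finset.card_erase_of_mem hmem, S₀.2]; rfl⟩
  let c := φ (Finsupp.single S₀ 1) U₀
  refine ⟨c, sub_eq_zero.1 (eq_zero_of_apply_single_erase_min'
    (sub_mem hφ (Submodule.smul_mem _ c boundary_mem_homND)) hS₀ (U₀ := U₀) rfl ?_)⟩
  rw [LinearMap.sub_apply, LinearMap.smul_apply, Finsupp.sub_apply, Finsupp.smul_apply,
    boundary_single_apply_erase S₀ hmem rfl, Finset.posSign_min', Int.cast_one, smul_eq_mul,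
    mul_one, sub_self]

end HomND

lemma Submodule.finrank_eq_one_of_forall_exists_smul {K V : Type*} [DivisionRing K] [AddCommGroup V]
    [Module K V] {P : Submodule K V} {v : V} (hv : v ∈ P) (hv0 : v ≠ 0)
    (h : ∀ w ∈ P, ∃ c : K, w = c • v) : Module.finrank K P = 1 := by
  have hP : P = K ∙ v := le_antisymm
    (fun w hw => Submodule.mem_span_singleton.2 ((h w hw).imp fun _ hc => hc.symm))
    ((Submodule.span_singleton_le_iff_mem v P).2 hv)
  rw [hP]
  exact finrank_span_singleton hv0

theorem ndf_hom_dim_general (n : ℕ) (k l : ℕ)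
    (hk1 : 1 ≤ k) (hk2 : k ≤ n) :
    Module.finrank ℂ ↥(HomND n k l) = if l = k ∨ l + 1 = k then 1 else 0 := by
  have := Subsets.nonempty hk2
  split_ifs with h
  · rcases h with rfl | rfl
    · exact Submodule.finrank_eq_one_of_forall_exists_smul id_mem_homND one_ne_zero
        fun φ hφ => HomND.exists_eq_smul_id hφ (by omega)
    · exact Submodule.finrank_eq_one_of_forall_exists_smul boundary_mem_homND boundary_ne_zero
        fun φ hφ => HomND.exists_eq_smul_boundary hφ
  · push Not at h
    rw [(Submodule.eq_bot_iff _).2 fun φ hφ =>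
      HomND.eq_zero_of_ne_of_add_one_ne hφ (by omega) h.1 h.2, finrank_bot]

/-- **Statement 16.** For `1 ≤ k, l ≤ n`,
`dim Hom_{ℂ[NDFₙ]}(Λ^k ℂ^n, Λ^l ℂ^n)` is `1` if `l ∈ {k, k-1}` and `0` otherwise. -/
theorem ndf_hom_dim (n : ℕ) (hn : 1 ≤ n) (k l : ℕ)
    (hk1 : 1 ≤ k) (hk2 : k ≤ n) (hl1 : 1 ≤ l) (hl2 : l ≤ n) :
    Module.finrank ℂ ↥(HomND n k l) = if l = k ∨ l + 1 = k then 1 else 0 :=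
  ndf_hom_dim_general n k l hk1 hk2

end
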